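/- For ξ ∈ ℝ^d \ {0} let P_ξ^⊥ := I_d − (ξ ⊗ ξ)/|ξ|² be the orthogonal projection onto ξ^⊥. Then for all nonzero vectors η+m and η+l in ℝ^d, |(η+m) · (P_{η+l}^⊥ − P_{η+m}^⊥) v| ≤ 4 |m − l| |v| for every v ∈ ℝ^d; equivalently, the operator norm of (η+m)ᵀ(P_{η+l}^⊥ − P_{η+m}^⊥) is at most 4|m−l|. -/
import Mathlib


open scoped RealInnerProductSpace

/-- The Leray projection symbol `P_ξ^⊥ v = v − (⟨ξ,v⟩/|ξ|²) ξ`, the orthogonal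
projection onto `ξ^⊥`. -/
noncomputable def lerayProj {d : ℕ} (ξ v : EuclideanSpace ℝ (Fin d)) :
    EuclideanSpace ℝ (Fin d) :=
  v - (⟪ξ, v⟫ / ‖ξ‖ ^ 2) • ξ

/-- The difference of Leray projections absorbs one derivative:
`|(η+m) ⋅ (P_{η+l}^⊥ − P_{η+m}^⊥) v| ≤ 4 |m−l| |v|` whenever `η+m, η+l ≠ 0`. -/
theorem stmt7 (d : ℕ) (η m l v : EuclideanSpace ℝ (Fin d))
    (h1 : η + m ≠ 0) (h2 : η + l ≠ 0) :
    |⟪η + m, lerayProj (η + l) v - lerayProj (η + m) v⟫| ≤ 4 * ‖m - l‖ * ‖v‖ := by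
  set a := η + m with ha_def
  set b := η + l with hb_def
  have ha : ‖a‖ ≠ 0 := norm_ne_zero_iff.mpr h1
  have hb : ‖b‖ ≠ 0 := norm_ne_zero_iff.mpr h2
  have hab : a = b + (m - l) := by rw [ha_def, hb_def]; abel
  have e1 : ⟪a, v⟫ = ⟪b, v⟫ + ⟪m - l, v⟫ := by rw [hab, inner_add_left]
  have e2 : ⟪a, b⟫ = ‖b‖ ^ 2 + ⟪m - l, b⟫ := by
    rw [hab, inner_add_left, real_inner_self_eq_norm_sq]
  have e3 : ⟪a, a⟫ = ‖a‖ ^ 2 := real_inner_self_eq_norm_sq a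
  have key : ⟪a, lerayProj b v - lerayProj a v⟫ =
      ⟪m - l, v⟫ - ⟪b, v⟫ * ⟪m - l, b⟫ / ‖b‖ ^ 2 := by
    simp only [lerayProj, inner_sub_right, inner_smul_right, e1, e2, e3]
    field_simp
    ring
  rw [key]
  have hbv : |⟪b, v⟫| ≤ ‖b‖ * ‖v‖ := abs_real_inner_le_norm b v
  have hmlv : |⟪m - l, v⟫| ≤ ‖m - l‖ * ‖v‖ := abs_real_inner_le_norm (m - l) v
  have hmlb : |⟪m - l, b⟫| ≤ ‖m - l‖ * ‖b‖ := abs_real_inner_le_norm (m - l) b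
  have h2' : |⟪b, v⟫ * ⟪m - l, b⟫ / ‖b‖ ^ 2| ≤ ‖m - l‖ * ‖v‖ := by
    rw [abs_div, abs_mul, abs_of_nonneg (by positivity : (0:ℝ) ≤ ‖b‖ ^ 2)]
    rw [div_le_iff₀ (by positivity)]
    calc |⟪b, v⟫| * |⟪m - l, b⟫| ≤ (‖b‖ * ‖v‖) * (‖m - l‖ * ‖b‖) := by
          apply mul_le_mul hbv hmlb (abs_nonneg _) (by positivity)
      _ = ‖m - l‖ * ‖v‖ * ‖b‖ ^ 2 := by ring
  calc |⟪m - l, v⟫ - ⟪b, v⟫ * ⟪m - l, b⟫ / ‖b‖ ^ 2|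
      ≤ |⟪m - l, v⟫| + |⟪b, v⟫ * ⟪m - l, b⟫ / ‖b‖ ^ 2| := abs_sub _ _
    _ ≤ ‖m - l‖ * ‖v‖ + ‖m - l‖ * ‖v‖ := add_le_add hmlv h2'
    _ ≤ 4 * ‖m - l‖ * ‖v‖ := by nlinarith [mul_nonneg (norm_nonneg (m - l)) (norm_nonneg v)]
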